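/- arXiv:1909.09518 — 3 statements merged into one kernel-verified Lean document; each statement's English description precedes it below -/
import Mathlib

section
/- Let T ∈ A ⊗ B ⊗ C with dim A = dim B = dim C = m be 1_A-generic, i.e., the induced map T_A: A* → B ⊗ C contains a full-rank element in its image. Then dim G_T ≤ 2m² − m − 1, and equality holds if and only if T is isomorphic to T₀ = a₁ ⊗ (Σ_{j=1}^m b_j ⊗ c_j). -/
open scoped BigOperators

/-- Leibniz-rule action; its kernel is the annihilator `g̃_T` of `T`, and
`dim G_T = dim g̃_T − 2`. -/
noncomputable def tensorActionL (a b c : ℕ) (T : Fin a → Fin b → Fin c → ℂ) :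
    (Matrix (Fin a) (Fin a) ℂ × Matrix (Fin b) (Fin b) ℂ × Matrix (Fin c) (Fin c) ℂ) →ₗ[ℂ]
      (Fin a → Fin b → Fin c → ℂ) where
  toFun p := fun i j k =>
    (∑ i', p.1 i i' * T i' j k) + (∑ j', p.2.1 j j' * T i j' k) +
      (∑ k', p.2.2 k k' * T i j k')
  map_add' p q := by
    funext i j k
    simp only [Prod.fst_add, Prod.snd_add, Matrix.add_apply, add_mul,
      Finset.sum_add_distrib, Pi.add_apply]
    ring
  map_smul' t p := by
    funext i j k
    simp only [Prod.smul_fst, Prod.smul_snd, Matrix.smul_apply, smul_eq_mul,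
      RingHom.id_apply, Pi.smul_apply, Finset.mul_sum, mul_add, mul_assoc]


/-- The contraction `T_A(α) ∈ B ⊗ C` of `T` against `α ∈ A*`, as a matrix. -/
noncomputable def contractA (a b c : ℕ) (T : Fin a → Fin b → Fin c → ℂ) (α : Fin a → ℂ) :
    Matrix (Fin b) (Fin c) ℂ :=
  Matrix.of fun j k => ∑ i, α i * T i j k

/-- `T` is `1_A`-generic if `T_A(A*)` contains a full rank element. -/
def OneAGeneric (m : ℕ) (T : Fin m → Fin m → Fin m → ℂ) : Prop :=
  ∃ α : Fin m → ℂ, IsUnit (contractA m m m T α).det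

/-- The orbit of a tensor `T` under `GL_a × GL_b × GL_c`; two tensors are
isomorphic iff they lie in the same orbit. -/
def glOrbit (a b c : ℕ) (T : Fin a → Fin b → Fin c → ℂ) :
    Set (Fin a → Fin b → Fin c → ℂ) :=
  {S | ∃ (g : Matrix (Fin a) (Fin a) ℂ) (h : Matrix (Fin b) (Fin b) ℂ)
        (l : Matrix (Fin c) (Fin c) ℂ), IsUnit g.det ∧ IsUnit h.det ∧ IsUnit l.det ∧
      S = fun i j k => ∑ i', ∑ j', ∑ k', g i i' * h j j' * l k k' * T i' j' k'}

/-!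
Write `Tᵢ` for the `A`-slices of `T`, fix `α` with `M = ∑ αᵢ Tᵢ` invertible, and let
`F (U, Y, Z)ᵢ = ∑ U_{ii'} T_{i'} + Y Tᵢ + Tᵢ Zᵀ` be the infinitesimal action, so that
`dim g̃_T = 3m² − rank F`. The image of `F` always contains the `(m − 1 + m²)`-dimensional space
of the `F (v ⊗ α, 0, Z) = (vᵢ M + Tᵢ Zᵀ)ᵢ` with `α ⬝ v = 0`, which gives the bound.
Equality means that every `F (0, Y, 0)` lies in that space; contracting with `α` forces
`Zᵀ = M⁻¹ Y M`, hence `[Y, Tᵢ M⁻¹] = vᵢ • 1`, and taking traces shows that `Tᵢ M⁻¹` is central.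
So `T = c ⊗ M`, which is exactly the shape of the tensors in the orbit of `T₀`.
-/

open Matrix

namespace Matrix

variable {n K : Type*} [Fintype n] [DecidableEq n] [Field K]

theorem ne_zero_of_isUnit_det {R : Type*} [CommRing R] [Nontrivial R] [Nonempty n]
    {M : Matrix n n R} (hM : IsUnit M.det) : M ≠ 0 := by
  rintro rfl
  simp at hM

theorem eq_zero_of_mul_sub_mul_eq_smul_one [CharZero K] [Nonempty n] {A B : Matrix n n K}
    {c : K} (h : A * B - B * A = c • 1) : c = 0 := by
  have htrace := congrArg trace h
  rw [trace_sub, trace_mul_comm, sub_self, trace_smul, trace_one, smul_eq_mul] at htrace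
  exact (mul_eq_zero.mp htrace.symm).resolve_right (by simp)

theorem exists_eq_smul_one_of_forall_commute {S : Matrix n n K} (h : ∀ Y, Commute Y S) :
    ∃ c : K, S = c • 1 := by
  obtain ⟨c, hc⟩ := mem_range_scalar_of_commute_single fun i j _ => h (single i j 1)
  exact ⟨c, by rw [← hc, scalar_apply, smul_one_eq_diagonal]⟩

theorem exists_isUnit_det_forall_apply_eq {c : n → K} (hc : c ≠ 0) (z : n) :
    ∃ g : Matrix n n K, IsUnit g.det ∧ ∀ i, g i z = c i := by
  obtain ⟨p, hp⟩ := Function.ne_iff.mp hc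
  -- the identity with column `p` replaced by `c`, then columns `z` and `p` swapped
  refine ⟨((1 : Matrix n n K).updateCol p c).submatrix id (Equiv.swap z p), ?_, fun i => ?_⟩
  · rw [det_permute', ← cramer_apply, cramer_one]
    exact ((Units.isUnit _).map (Int.castRingHom K)).mul (isUnit_iff_ne_zero.mpr hp)
  · simp

end Matrix

namespace OneAGeneric

variable {m : ℕ} {T : Fin m → Fin m → Fin m → ℂ} {α : Fin m → ℂ}

def slice (T : Fin m → Fin m → Fin m → ℂ) (i : Fin m) : Matrix (Fin m) (Fin m) ℂ :=
  Matrix.of (T i)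

@[simp]
theorem slice_zero (i : Fin m) : slice 0 i = 0 :=
  rfl

theorem ext_slice {S : Fin m → Fin m → Fin m → ℂ} (h : ∀ i, slice S i = slice T i) : S = T :=
  funext h

theorem contractA_eq_sum_slice : contractA m m m T α = ∑ i, α i • slice T i := by
  ext j k
  simp [contractA, slice, Matrix.sum_apply]

@[simp]
theorem contractA_zero_left : contractA m m m 0 α = 0 := by
  ext j k
  simp [contractA]

@[simp]
theorem contractA_zero_right : contractA m m m T 0 = 0 := by
  ext j k
  simp [contractA]

theorem slice_tensorActionL (U Y Z : Matrix (Fin m) (Fin m) ℂ) (i : Fin m) :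
    slice (tensorActionL m m m T (U, Y, Z)) i =
      ∑ i', U i i' • slice T i' + Y * slice T i + slice T i * Zᵀ := by
  ext j k
  simp [tensorActionL, slice, Matrix.sum_apply, Matrix.mul_apply, mul_comm]

theorem contractA_tensorActionL (U Y Z : Matrix (Fin m) (Fin m) ℂ) :
    contractA m m m (tensorActionL m m m T (U, Y, Z)) α =
      contractA m m m T (α ᵥ* U) + Y * contractA m m m T α + contractA m m m T α * Zᵀ := by
  simp only [contractA_eq_sum_slice, slice_tensorActionL, smul_add, Finset.sum_add_distrib,
    Finset.mul_sum, Finset.sum_mul, Matrix.mul_smul, Matrix.smul_mul, Finset.smul_sum, smul_smul,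
    vecMul, dotProduct, Finset.sum_smul]
  rw [Finset.sum_comm]

theorem slice_tensorActionL_vecMulVec (v : Fin m → ℂ) (Z : Matrix (Fin m) (Fin m) ℂ)
    (i : Fin m) :
    slice (tensorActionL m m m T (vecMulVec v α, 0, Z)) i =
      v i • contractA m m m T α + slice T i * Zᵀ := by
  simp [slice_tensorActionL, contractA_eq_sum_slice, vecMulVec_apply, Finset.smul_sum, smul_smul]

theorem ne_zero_of_isUnit_det_contractA [NeZero m] (hM : IsUnit (contractA m m m T α).det) :
    α ≠ 0 := by
  rintro rfl
  exact ne_zero_of_isUnit_det hM contractA_zero_right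

def minimalRangeParam (α : Fin m → ℂ) :
    LinearMap.ker (dotProductEquiv ℂ (Fin m) α) × Matrix (Fin m) (Fin m) ℂ →ₗ[ℂ]
      Matrix (Fin m) (Fin m) ℂ × Matrix (Fin m) (Fin m) ℂ × Matrix (Fin m) (Fin m) ℂ :=
  ((vecMulVecBilin ℂ ℂ).flip α ∘ₗ (LinearMap.ker _).subtype).prodMap (LinearMap.inr ℂ _ _)

noncomputable def minimalRange (T : Fin m → Fin m → Fin m → ℂ) (α : Fin m → ℂ) :
    Submodule ℂ (Fin m → Fin m → Fin m → ℂ) :=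
  LinearMap.range (tensorActionL m m m T ∘ₗ minimalRangeParam α)

theorem mem_minimalRange {S : Fin m → Fin m → Fin m → ℂ} :
    S ∈ minimalRange T α ↔
      ∃ v Z, α ⬝ᵥ v = 0 ∧ tensorActionL m m m T (vecMulVec v α, 0, Z) = S := by
  constructor
  · rintro ⟨⟨⟨v, hv⟩, Z⟩, rfl⟩
    exact ⟨v, Z, hv, rfl⟩
  · rintro ⟨v, Z, hv, rfl⟩
    exact ⟨⟨⟨v, hv⟩, Z⟩, rfl⟩

theorem minimalRange_le_range (T : Fin m → Fin m → Fin m → ℂ) (α : Fin m → ℂ) :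
    minimalRange T α ≤ LinearMap.range (tensorActionL m m m T) :=
  LinearMap.range_comp_le_range _ _

theorem tensorActionL_comp_minimalRangeParam_injective
    (hM : IsUnit (contractA m m m T α).det) :
    Function.Injective (tensorActionL m m m T ∘ₗ minimalRangeParam α) := by
  rw [← LinearMap.ker_eq_bot, LinearMap.ker_eq_bot']
  rintro ⟨⟨v, hv⟩, Z⟩ h
  change tensorActionL m m m T (vecMulVec v α, 0, Z) = 0 at h
  have hαv : α ⬝ᵥ v = 0 := by simpa using hv
  have hZ : Z = 0 := by
    have hc := congrArg (contractA m m m · α) h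
    simp only [contractA_tensorActionL, vecMul_vecMulVec, hαv, zero_smul, contractA_zero_right,
      contractA_zero_left, zero_mul, zero_add] at hc
    rw [← transpose_eq_zero, ← nonsing_inv_mul_cancel_left (B := Zᵀ) (h := hM), hc, mul_zero]
  subst hZ
  have hvi : ∀ i, v i • contractA m m m T α = 0 := fun i => by
    simpa [slice_tensorActionL_vecMulVec] using congrArg (slice · i) h
  refine Prod.ext (Subtype.ext (funext fun i => ?_)) rfl
  have : NeZero m := NeZero.of_pos i.pos
  simpa [ne_zero_of_isUnit_det hM] using hvi i

theorem finrank_minimalRange [NeZero m] (hM : IsUnit (contractA m m m T α).det) :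
    Module.finrank ℂ (minimalRange T α) = m - 1 + m ^ 2 := by
  have hdot : dotProductEquiv ℂ (Fin m) α ≠ 0 :=
    (LinearEquiv.map_ne_zero_iff _).mpr (ne_zero_of_isUnit_det_contractA hM)
  have hker := Module.Dual.finrank_ker_add_one_of_ne_zero hdot
  rw [Module.finrank_fin_fun] at hker
  rw [minimalRange,
    LinearMap.finrank_range_of_inj (tensorActionL_comp_minimalRangeParam_injective hM),
    Module.finrank_prod, Module.finrank_matrix, Module.finrank_self, Fintype.card_fin, ← sq]
  omega

theorem finrank_ker_add_finrank_range_tensorActionL (T : Fin m → Fin m → Fin m → ℂ) :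
    Module.finrank ℂ (LinearMap.ker (tensorActionL m m m T)) +
      Module.finrank ℂ (LinearMap.range (tensorActionL m m m T)) = 3 * m ^ 2 := by
  rw [add_comm, LinearMap.finrank_range_add_finrank_ker, Module.finrank_prod,
    Module.finrank_prod, Module.finrank_matrix, Module.finrank_self, Fintype.card_fin]
  ring

theorem finrank_ker_tensorActionL_le [NeZero m] (hM : IsUnit (contractA m m m T α).det) :
    Module.finrank ℂ (LinearMap.ker (tensorActionL m m m T)) ≤ 2 * m ^ 2 - m + 1 := by
  have hle := Submodule.finrank_mono (minimalRange_le_range T α)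
  have hsum := finrank_ker_add_finrank_range_tensorActionL T
  rw [finrank_minimalRange hM] at hle
  have : m ≤ m ^ 2 := Nat.le_self_pow two_ne_zero m
  omega

theorem finrank_ker_tensorActionL_eq_iff [NeZero m] (hM : IsUnit (contractA m m m T α).det) :
    Module.finrank ℂ (LinearMap.ker (tensorActionL m m m T)) = 2 * m ^ 2 - m + 1 ↔
      LinearMap.range (tensorActionL m m m T) ≤ minimalRange T α := by
  have hle := minimalRange_le_range T α
  have hsum := finrank_ker_add_finrank_range_tensorActionL T
  have hmin := finrank_minimalRange hM
  have : m ≤ m ^ 2 := Nat.le_self_pow two_ne_zero m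
  have : 1 ≤ m := NeZero.one_le
  constructor
  · intro hker
    exact (Submodule.eq_of_le_of_finrank_eq hle (by omega)).ge
  · intro hge
    have := Submodule.finrank_mono hge
    have := Submodule.finrank_mono hle
    omega

theorem commute_slice_mul_inv_of_range_le (hM : IsUnit (contractA m m m T α).det)
    (h : LinearMap.range (tensorActionL m m m T) ≤ minimalRange T α)
    (Y : Matrix (Fin m) (Fin m) ℂ) (i : Fin m) :
    Commute Y (slice T i * (contractA m m m T α)⁻¹) := by
  set M := contractA m m m T α
  obtain ⟨v, Z, hαv, hvZ⟩ := mem_minimalRange.mp (h ⟨(0, Y, 0), rfl⟩)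
  have hZ : Zᵀ = M⁻¹ * Y * M := by
    have hc := congrArg (contractA m m m · α) hvZ
    simp only [contractA_tensorActionL, vecMul_vecMulVec, hαv, zero_smul, vecMul_zero,
      contractA_zero_right, zero_mul, zero_add, transpose_zero, mul_zero, add_zero] at hc
    rw [mul_assoc, ← hc, nonsing_inv_mul_cancel_left (h := hM)]
  have hslice : v i • M + slice T i * Zᵀ = Y * slice T i := by
    have := congrArg (slice · i) hvZ
    rw [slice_tensorActionL_vecMulVec, slice_tensorActionL] at this
    simpa using this
  have hcomm : Y * (slice T i * M⁻¹) - slice T i * M⁻¹ * Y = v i • 1 := by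
    rw [← mul_assoc, ← hslice, hZ, add_mul, smul_mul, mul_nonsing_inv _ hM]
    simp only [mul_assoc, mul_nonsing_inv_cancel_right (h := hM), add_sub_cancel_right]
  have : NeZero m := NeZero.of_pos i.pos
  rw [eq_zero_of_mul_sub_mul_eq_smul_one hcomm, zero_smul, sub_eq_zero] at hcomm
  exact hcomm

theorem dotProduct_eq_one_of_slice_eq_smul [NeZero m] {c : Fin m → ℂ}
    (hM : IsUnit (contractA m m m T α).det) (hc : ∀ i, slice T i = c i • contractA m m m T α) :
    α ⬝ᵥ c = 1 := by
  have hMM : (α ⬝ᵥ c) • contractA m m m T α = (1 : ℂ) • contractA m m m T α := by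
    conv_rhs => rw [one_smul, contractA_eq_sum_slice]
    simp only [hc, smul_smul, dotProduct, Finset.sum_smul]
  exact smul_left_injective ℂ (ne_zero_of_isUnit_det hM) hMM

theorem range_le_minimalRange_of_slice_eq_smul [NeZero m] {c : Fin m → ℂ}
    (hM : IsUnit (contractA m m m T α).det) (hc : ∀ i, slice T i = c i • contractA m m m T α) :
    LinearMap.range (tensorActionL m m m T) ≤ minimalRange T α := by
  set M := contractA m m m T α
  have hαc := dotProduct_eq_one_of_slice_eq_smul hM hc
  rintro _ ⟨⟨U, Y, Z⟩, rfl⟩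
  set s := α ⬝ᵥ (U *ᵥ c)
  refine mem_minimalRange.mpr ⟨U *ᵥ c - s • c, Z + (M⁻¹ * Y * M)ᵀ + s • 1, ?_, ?_⟩
  · rw [dotProduct_sub, dotProduct_smul, hαc, smul_eq_mul, mul_one, sub_self]
  · refine ext_slice fun i => ?_
    rw [slice_tensorActionL_vecMulVec, slice_tensorActionL]
    simp only [hc, smul_smul, ← Finset.sum_smul, transpose_add, transpose_transpose,
      transpose_smul, transpose_one, mul_add, Matrix.smul_mul, Matrix.mul_smul, mul_one,
      mul_assoc, mul_nonsing_inv_cancel_left (h := hM), Pi.sub_apply, Pi.smul_apply]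
    simp only [mulVec, dotProduct, smul_eq_mul]
    module

theorem range_le_minimalRange_iff [NeZero m] (hM : IsUnit (contractA m m m T α).det) :
    LinearMap.range (tensorActionL m m m T) ≤ minimalRange T α ↔
      ∃ c : Fin m → ℂ, ∀ i, slice T i = c i • contractA m m m T α := by
  refine ⟨fun h => ?_, fun ⟨c, hc⟩ => range_le_minimalRange_of_slice_eq_smul hM hc⟩
  choose c hc using fun i =>
    exists_eq_smul_one_of_forall_commute (commute_slice_mul_inv_of_range_le hM h · i)
  refine ⟨c, fun i => ?_⟩
  rw [← nonsing_inv_mul_cancel_right (B := slice T i) (h := hM), hc i, smul_mul, one_mul]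

/-- The tensor `a_z ⊗ ∑ⱼ bⱼ ⊗ cⱼ`. -/
def idTensor (z : Fin m) : Fin m → Fin m → Fin m → ℂ :=
  fun i j k => if i = z ∧ j = k then 1 else 0

theorem slice_transform_idTensor (z : Fin m) (g h l : Matrix (Fin m) (Fin m) ℂ) (i : Fin m) :
    slice (fun i j k => ∑ i', ∑ j', ∑ k', g i i' * h j j' * l k k' * idTensor z i' j' k') i =
      g i z • (h * lᵀ) := by
  ext j k
  simp [idTensor, slice, Matrix.mul_apply, ite_and, Finset.mul_sum, mul_assoc]

theorem mem_glOrbit_idTensor_iff [NeZero m] (z : Fin m) (hM : IsUnit (contractA m m m T α).det) :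
    T ∈ glOrbit m m m (idTensor z) ↔
      ∃ c : Fin m → ℂ, ∀ i, slice T i = c i • contractA m m m T α := by
  constructor
  · rintro ⟨g, h, l, -, -, -, hT⟩
    have hslice : ∀ i, slice T i = g i z • (h * lᵀ) := by
      rw [hT]
      exact slice_transform_idTensor z g h l
    set a := ∑ i, α i * g i z
    have hMa : contractA m m m T α = a • (h * lᵀ) := by
      simp only [contractA_eq_sum_slice, hslice, smul_smul, a, Finset.sum_smul]
    have ha : a ≠ 0 := by
      rintro ha
      exact ne_zero_of_isUnit_det hM (by rw [hMa, ha, zero_smul])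
    refine ⟨fun i => g i z / a, fun i => ?_⟩
    rw [hslice, hMa, smul_smul, div_mul_cancel₀ _ ha]
  · rintro ⟨c, hc⟩
    have hc0 : c ≠ 0 := by
      rintro rfl
      simpa using dotProduct_eq_one_of_slice_eq_smul hM hc
    obtain ⟨g, hg, hgz⟩ := exists_isUnit_det_forall_apply_eq hc0 z
    refine ⟨g, contractA m m m T α, 1, hg, hM, by simp, ext_slice fun i => ?_⟩
    rw [slice_transform_idTensor, hc, hgz, transpose_one, mul_one]

end OneAGeneric

/-- A `1_A`-generic tensor `T ∈ ℂ^m ⊗ ℂ^m ⊗ ℂ^m` satisfies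
`dim G_T ≤ 2m² − m − 1` (i.e. `dim g̃_T ≤ 2m² − m + 1`), with equality iff `T` is
isomorphic to `T₀ = a₁ ⊗ (Σ_j b_j ⊗ c_j)`. -/
theorem oneAGeneric_max_symmetry (m : ℕ) (hm : 1 ≤ m)
    (T : Fin m → Fin m → Fin m → ℂ) (hgen : OneAGeneric m T) :
    Module.finrank ℂ (LinearMap.ker (tensorActionL m m m T)) ≤ 2 * m ^ 2 - m + 1 ∧
    (Module.finrank ℂ (LinearMap.ker (tensorActionL m m m T)) = 2 * m ^ 2 - m + 1 ↔
      T ∈ glOrbit m m m (fun i j k => if i = ⟨0, hm⟩ ∧ j = k then 1 else 0)) := by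
  have : NeZero m := ⟨by omega⟩
  obtain ⟨α, hM⟩ := hgen
  refine ⟨OneAGeneric.finrank_ker_tensorActionL_le hM, ?_⟩
  rw [OneAGeneric.finrank_ker_tensorActionL_eq_iff hM, OneAGeneric.range_le_minimalRange_iff hM]
  exact (OneAGeneric.mem_glOrbit_idTensor_iff _ hM).symm
end

section
/- For T₀ = a₁ ⊗ (Σ_{j=1}^m b_j ⊗ c_j) ∈ ℂ^m ⊗ ℂ^m ⊗ ℂ^m, the annihilator g̃_{T₀} in gl_m ⊕ gl_m ⊕ gl_m consists of triples (U, μ·Id + V, ν·Id − Vᵗ) where μ, ν ∈ ℂ, V ∈ gl_m, and U has first row (−(μ+ν), u) for arbitrary u ∈ ℂ^{m−1}, first column (below the diagonal entry) zero, and arbitrary lower-right (m−1)×(m−1) block; consequently dim g̃_{T₀} = 2m² − m + 1. -/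
open scoped BigOperators
open Matrix

/-!
The `(i, j, k)` entry of the action of `(U, B, C)` on `T₀ = a_{i₀} ⊗ Σ_j b_j ⊗ c_j` is
`[j = k] U i i₀ + [i = i₀] (B j k + C k j)`. So `(U, B, C)` annihilates `T₀` exactly when the
column `i₀` of `U` vanishes off the diagonal and `C = -U i₀ i₀ • 1 - Bᵀ`. The annihilator is
therefore parametrized by `B`, the scalar `U i₀ i₀` and the remaining `a - 1` columns of `U`,
which gives its dimension `a (a - 1) + 1 + n²`.
-/

theorem eq_neg_smul_one_sub_transpose_iff {R ι : Type*} [CommRing R] [Fintype ι]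
    [DecidableEq ι] (B C : Matrix ι ι R) (u : R) :
    C = -u • 1 - Bᵀ ↔
      ∃ (μ ν : R) (V : Matrix ι ι R), B = μ • 1 + V ∧ C = ν • 1 - Vᵀ ∧ u = -(μ + ν) := by
  constructor
  · intro hC
    exact ⟨0, -u, B, by simp, hC, by ring⟩
  · rintro ⟨μ, ν, V, rfl, rfl, rfl⟩
    simp only [transpose_add, transpose_smul, transpose_one]
    module

namespace SingleTensorId

variable {a n : ℕ} (i₀ : Fin a)

def singleTensorId (n : ℕ) : Fin a → Fin n → Fin n → ℂ :=
  fun i j k => if i = i₀ ∧ j = k then 1 else 0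

theorem tensorActionL_singleTensorId_apply
    (p : Matrix (Fin a) (Fin a) ℂ × Matrix (Fin n) (Fin n) ℂ × Matrix (Fin n) (Fin n) ℂ)
    (i : Fin a) (j k : Fin n) :
    tensorActionL a n n (singleTensorId i₀ n) p i j k =
      (if j = k then p.1 i i₀ else 0) + (if i = i₀ then p.2.1 j k + p.2.2 k j else 0) := by
  by_cases hi : i = i₀ <;> by_cases hjk : j = k <;>
    simp [tensorActionL, singleTensorId, hi, hjk, add_assoc]

theorem mem_ker_tensorActionL_singleTensorId [NeZero n]
    (p : Matrix (Fin a) (Fin a) ℂ × Matrix (Fin n) (Fin n) ℂ × Matrix (Fin n) (Fin n) ℂ) :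
    p ∈ LinearMap.ker (tensorActionL a n n (singleTensorId i₀ n)) ↔
      (∀ i ≠ i₀, p.1 i i₀ = 0) ∧ p.2.2 = -p.1 i₀ i₀ • 1 - p.2.1ᵀ := by
  simp only [LinearMap.mem_ker, funext_iff, Pi.zero_apply, tensorActionL_singleTensorId_apply]
  constructor
  · intro h
    refine ⟨fun i hi => by simpa [hi] using h i 0 0, ?_⟩
    ext k j
    have hjk := h i₀ j k
    by_cases hkj : k = j
    · subst hkj
      simp at hjk ⊢
      linear_combination hjk
    · simp [hkj, Ne.symm hkj] at hjk ⊢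
      linear_combination hjk
  · rintro ⟨hcol, hC⟩ i j k
    by_cases hi : i = i₀
    · subst hi
      by_cases hjk : j = k
      · subst hjk
        simp [hC]
      · simp [hC, hjk, Ne.symm hjk]
    · simp [hi, hcol i hi]

def annihilatorParam (n : ℕ) :
    (Matrix (Fin a) {j // j ≠ i₀} ℂ × ℂ × Matrix (Fin n) (Fin n) ℂ) →ₗ[ℂ]
      (Matrix (Fin a) (Fin a) ℂ × Matrix (Fin n) (Fin n) ℂ × Matrix (Fin n) (Fin n) ℂ) where
  toFun q :=
    (Matrix.of fun i j => if h : j = i₀ then (if i = i₀ then q.2.1 else 0) else q.1 i ⟨j, h⟩,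
      q.2.2, -q.2.1 • 1 - q.2.2ᵀ)
  map_add' q q' := by
    refine Prod.ext ?_ (Prod.ext rfl ?_)
    · ext i j
      simp only [Prod.fst_add, Prod.snd_add, Matrix.of_apply, Matrix.add_apply]
      split_ifs <;> simp
    · simp only [Prod.snd_add, Prod.fst_add, transpose_add]
      module
  map_smul' t q := by
    refine Prod.ext ?_ (Prod.ext rfl ?_)
    · ext i j
      simp only [Prod.smul_fst, Prod.smul_snd, Matrix.of_apply, Matrix.smul_apply]
      split_ifs <;> simp
    · simp only [Prod.smul_snd, Prod.smul_fst, RingHom.id_apply, transpose_smul, smul_eq_mul]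
      module

theorem injective_annihilatorParam : Function.Injective (annihilatorParam i₀ n) := by
  rintro ⟨U, u, B⟩ ⟨U', u', B'⟩ h
  simp only [annihilatorParam, LinearMap.coe_mk, AddHom.coe_mk, Prod.mk.injEq] at h
  obtain ⟨hU, hB, -⟩ := h
  have hu : u = u' := by simpa using congrFun₂ hU i₀ i₀
  refine Prod.ext ?_ (Prod.ext hu hB)
  ext i j
  simpa [j.2] using congrFun₂ hU i j

theorem range_annihilatorParam [NeZero n] :
    LinearMap.range (annihilatorParam i₀ n) =
      LinearMap.ker (tensorActionL a n n (singleTensorId i₀ n)) := by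
  ext p
  rw [LinearMap.mem_range, mem_ker_tensorActionL_singleTensorId]
  constructor
  · rintro ⟨q, rfl⟩
    refine ⟨fun i hi => ?_, ?_⟩ <;> simp_all [annihilatorParam]
  · rintro ⟨hcol, hC⟩
    refine ⟨(Matrix.of fun i j => p.1 i j, p.1 i₀ i₀, p.2.1), Prod.ext ?_ (Prod.ext rfl hC.symm)⟩
    ext i j
    by_cases hj : j = i₀
    · subst hj
      by_cases hi : i = j <;> simp [annihilatorParam, hi, hcol]
    · simp [annihilatorParam, hj]

theorem finrank_ker_tensorActionL_singleTensorId [NeZero n] :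
    Module.finrank ℂ (LinearMap.ker (tensorActionL a n n (singleTensorId i₀ n))) =
      a * (a - 1) + 1 + n ^ 2 := by
  rw [← range_annihilatorParam, LinearMap.finrank_range_of_inj (injective_annihilatorParam i₀)]
  simp [Module.finrank_prod, Module.finrank_matrix, sq]
  ring

end SingleTensorId

open SingleTensorId in
/-- For `T₀ = a₁ ⊗ (Σ_j b_j ⊗ c_j)`, the annihilator `g̃_{T₀}` consists of the
triples `(U, μ·Id + V, ν·Id − Vᵗ)` with `V` arbitrary, `U` having first entry
`−(μ+ν)` and zero first column below it (first row and lower-right block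
arbitrary); consequently `dim g̃_{T₀} = 2m² − m + 1`. -/
theorem annihilator_of_T0 (m : ℕ) (hm : 1 ≤ m) :
    (∀ p : Matrix (Fin m) (Fin m) ℂ × Matrix (Fin m) (Fin m) ℂ × Matrix (Fin m) (Fin m) ℂ,
      p ∈ LinearMap.ker (tensorActionL m m m
          (fun i j k => if i = ⟨0, hm⟩ ∧ j = k then 1 else 0)) ↔
        ∃ (mu nu : ℂ) (V : Matrix (Fin m) (Fin m) ℂ),
          p.2.1 = mu • (1 : Matrix (Fin m) (Fin m) ℂ) + V ∧
          p.2.2 = nu • (1 : Matrix (Fin m) (Fin m) ℂ) - Vᵀ ∧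
          p.1 ⟨0, hm⟩ ⟨0, hm⟩ = -(mu + nu) ∧
          (∀ i : Fin m, i ≠ ⟨0, hm⟩ → p.1 i ⟨0, hm⟩ = 0)) ∧
    Module.finrank ℂ (LinearMap.ker (tensorActionL m m m
        (fun i j k => if i = ⟨0, hm⟩ ∧ j = k then 1 else 0))) = 2 * m ^ 2 - m + 1 := by
  have : NeZero m := ⟨by omega⟩
  have hT : (fun i j k => if i = ⟨0, hm⟩ ∧ j = k then 1 else 0) =
      singleTensorId ⟨0, hm⟩ m := rfl
  rw [hT, finrank_ker_tensorActionL_singleTensorId]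
  refine ⟨fun p => ?_, ?_⟩
  · rw [mem_ker_tensorActionL_singleTensorId, eq_neg_smul_one_sub_transpose_iff]
    tauto
  · obtain ⟨k, rfl⟩ : ∃ k, m = k + 1 := ⟨m - 1, by omega⟩
    simp only [add_tsub_cancel_right]
    ring_nf
    omega
end

section
/- Let B = Q + Λ be a nondegenerate bilinear form on ℂ^k where Q is symmetric of rank 1 and Λ is skew-symmetric of rank k−1 with ker(Λ) ∩ ker(Q) = 0 (so k is odd). Then dim h_B = k(k−1)/2. -/
open Matrix

/-- The linear map `X ↦ XB + BXᵗ`; its kernel is the symmetry Lie algebra `h_B`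
of the bilinear form `B`, i.e. the Lie algebra of the stabilizer of `B` under
`g · B = g B gᵗ`. -/
noncomputable def formActionL (n : Type*) [Fintype n] [DecidableEq n]
    (B : Matrix n n ℂ) : Matrix n n ℂ →ₗ[ℂ] Matrix n n ℂ where
  toFun X := X * B + B * Xᵀ
  map_add' X Y := by
    simp only [Matrix.transpose_add, Matrix.add_mul, Matrix.mul_add]
    abel
  map_smul' t X := by
    simp only [Matrix.transpose_smul, Matrix.smul_mul, Matrix.mul_smul,
      RingHom.id_apply, smul_add]

/-!
Transposing `XB + BXᵀ = 0` gives the same equation for `Bᵀ = Q - Λ`, so `h_B = h_Q ∩ h_Λ`.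
Over `ℂ` the rank-one symmetric `Q` is `vvᵀ`, and `h_Q = {X | Xv = 0}`; for such `X` we have
`XB = XΛ`, which is symmetric exactly when `X ∈ h_Λ`. If `u` spans `ker Λ`, then
`Bu = (v ⬝ u) v` with `v ⬝ u ≠ 0` as `B` is invertible, so `X ↦ XB` maps `h_B` isomorphically
onto the symmetric matrices `S` with `Su = 0`. Since `S ↦ Su` maps the symmetric matrices onto
`ℂ^k`, these form a space of dimension `k(k+1)/2 - k = k(k-1)/2`.
-/

open Module

theorem Submodule.finrank_inf_ker_add_finrank {K V W : Type*} [DivisionRing K] [AddCommGroup V]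
    [Module K V] [AddCommGroup W] [Module K W] (p : Submodule K V) [FiniteDimensional K p]
    {f : V →ₗ[K] W} (hf : Function.Surjective (f ∘ₗ p.subtype)) :
    finrank K ↥(p ⊓ LinearMap.ker f) + finrank K W = finrank K p := by
  rw [← (f ∘ₗ p.subtype).finrank_range_add_finrank_ker, LinearMap.range_eq_top.mpr hf, finrank_top,
    add_comm, LinearMap.ker_comp, ← Submodule.map_comap_subtype, Submodule.finrank_map_subtype_eq]

namespace Matrix

variable {m n K : Type*} [Field K]

theorem eq_zero_of_vecMulVec_add_vecMulVec_eq_zero [NeZero (2 : K)] {a v : n → K} (hv : v ≠ 0)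
    (h : vecMulVec a v + vecMulVec v a = 0) : a = 0 := by
  obtain ⟨j, hj⟩ := Function.ne_iff.mp hv
  have hentry (i : n) : a i * v j + v i * a j = 0 := by
    simpa [vecMulVec_apply] using congrFun (congrFun h i) j
  have haj : a j = 0 := by
    have : (2 : K) * (a j * v j) = 0 := by linear_combination hentry j
    exact (mul_eq_zero.mp ((mul_eq_zero.mp this).resolve_left two_ne_zero)).resolve_right hj
  funext i
  exact (mul_eq_zero.mp (by simpa [haj] using hentry i)).resolve_right hj

def symmetricMatrices (n K : Type*) [Field K] : Submodule K (Matrix n n K) where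
  carrier := {A | A.IsSymm}
  add_mem' := IsSymm.add
  zero_mem' := isSymm_zero
  smul_mem' c _ hA := hA.smul c

def symmetricMatricesEquivSym2 : symmetricMatrices n K ≃ₗ[K] (Sym2 n → K) where
  toFun A := Sym2.lift ⟨fun i j => A.1 i j, fun i j => (A.2.apply i j).symm⟩
  map_add' A B := funext fun p => p.ind fun i j => rfl
  map_smul' c A := funext fun p => p.ind fun i j => rfl
  invFun f := ⟨of fun i j => f s(i, j), IsSymm.ext fun i j => by simp [Sym2.eq_swap]⟩
  left_inv A := by ext; simp
  right_inv f := funext fun p => p.ind fun i j => rfl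

variable [Fintype n]

theorem finrank_symmetricMatrices :
    finrank K (symmetricMatrices n K) = (Fintype.card n + 1).choose 2 := by
  rw [symmetricMatricesEquivSym2.finrank_eq, finrank_fintype_fun_eq_card, Sym2.card]

variable [DecidableEq n]

theorem exists_eq_vecMulVec_of_rank_le_one {A : Matrix m n K} (hA : A.rank ≤ 1) :
    ∃ (w : m → K) (c : n → K), A = vecMulVec w c := by
  obtain ⟨⟨w, _⟩, hw⟩ :=
    finrank_le_one_iff.mp (show finrank K (LinearMap.range A.mulVecLin) ≤ 1 from hA)
  have hcol (j : n) : ∃ c : K, c • w = A.col j := by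
    obtain ⟨c, hc⟩ := hw ⟨A *ᵥ Pi.single j 1, Pi.single j 1, rfl⟩
    exact ⟨c, by simpa [mulVec_single_one] using congrArg Subtype.val hc⟩
  choose c hc using hcol
  refine ⟨w, c, ext fun i j => ?_⟩
  simpa [vecMulVec_apply, mul_comm] using (congrFun (hc j) i).symm

theorem IsSymm.exists_eq_vecMulVec_self_of_rank_eq_one [IsAlgClosed K] {A : Matrix n n K}
    (hA : A.IsSymm) (h : A.rank = 1) : ∃ v : n → K, A = vecMulVec v v := by
  obtain ⟨a, b, rfl⟩ := exists_eq_vecMulVec_of_rank_le_one h.le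
  by_cases ha : a = 0
  · exact ⟨0, by simp [ha]⟩
  obtain ⟨i, hi⟩ := Function.ne_iff.mp ha
  have hb : b = (b i / a i) • a := funext fun j => by
    have := hA.apply i j
    simp only [vecMulVec_apply] at this
    rw [Pi.smul_apply, smul_eq_mul, div_mul_eq_mul_div, eq_div_iff hi]
    linear_combination -this
  obtain ⟨s, hs⟩ := IsAlgClosed.exists_pow_nat_eq (b i / a i) two_pos
  refine ⟨s • a, ?_⟩
  rw [hb, ← hs]
  ext
  simp only [vecMulVec_apply, Pi.smul_apply, smul_eq_mul]
  ring

theorem det_eq_zero_of_rank_lt {A : Matrix n n K} (h : A.rank < Fintype.card n) : A.det = 0 := by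
  by_contra hdet
  exact h.ne (rank_of_isUnit A ((isUnit_iff_isUnit_det A).mpr (Ne.isUnit hdet)))

theorem exists_isSymm_mulVec_eq {u : n → K} (hu : u ≠ 0) (w : n → K) :
    ∃ S : Matrix n n K, S.IsSymm ∧ S *ᵥ u = w := by
  obtain ⟨i, hi⟩ := Function.ne_iff.mp hu
  set z : n → K := Pi.single i (u i)⁻¹
  have hzu : z ⬝ᵥ u = 1 := by simp [z, single_dotProduct, inv_mul_cancel₀ hi]
  refine ⟨vecMulVec w z + vecMulVec z w - (w ⬝ᵥ u) • vecMulVec z z, ?_, ?_⟩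
  · simp only [IsSymm, transpose_sub, transpose_add, transpose_smul, transpose_vecMulVec]
    abel
  · simp [sub_mulVec, add_mulVec, smul_mulVec, vecMulVec_mulVec, hzu]

theorem finrank_symmetricMatrices_inf_ker_mulVec {u : n → K} (hu : u ≠ 0) :
    finrank K ↥(symmetricMatrices n K ⊓ LinearMap.ker ((mulVecBilin K K).flip u)) =
      (Fintype.card n).choose 2 := by
  have hsurj : Function.Surjective ((mulVecBilin K K).flip u ∘ₗ (symmetricMatrices n K).subtype) :=
    fun w => by
      obtain ⟨S, hS, hSu⟩ := exists_isSymm_mulVec_eq hu w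
      exact ⟨⟨S, hS⟩, hSu⟩
  have hpascal : (Fintype.card n + 1).choose 2 = (Fintype.card n).choose 2 + Fintype.card n := by
    simp [Nat.choose_succ_succ', add_comm]
  have := (symmetricMatrices n K).finrank_inf_ker_add_finrank hsurj
  rw [finrank_symmetricMatrices, finrank_fintype_fun_eq_card, hpascal] at this
  omega

end Matrix

section formAction

variable {n : Type*} [Fintype n] [DecidableEq n]

theorem mem_ker_formActionL {B X : Matrix n n ℂ} :
    X ∈ LinearMap.ker (formActionL n B) ↔ X * B + B * Xᵀ = 0 := Iff.rfl

theorem ker_formActionL_add_eq_inf {Q L : Matrix n n ℂ} (hQ : Qᵀ = Q) (hL : Lᵀ = -L) :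
    LinearMap.ker (formActionL n (Q + L)) =
      LinearMap.ker (formActionL n Q) ⊓ LinearMap.ker (formActionL n L) := by
  ext X
  simp only [Submodule.mem_inf, mem_ker_formActionL]
  constructor
  · intro h
    have hT : X * (Q - L) + (Q - L) * Xᵀ = 0 := by
      simpa [transpose_add, transpose_mul, hQ, hL, ← sub_eq_add_neg, add_comm] using
        congrArg transpose h
    have hQ' : (2 : ℂ) • (X * Q + Q * Xᵀ) = 0 :=
      calc (2 : ℂ) • (X * Q + Q * Xᵀ)
          = (X * (Q + L) + (Q + L) * Xᵀ) + (X * (Q - L) + (Q - L) * Xᵀ) := by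
            rw [two_smul]; noncomm_ring
        _ = 0 := by rw [h, hT, add_zero]
    have hL' : (2 : ℂ) • (X * L + L * Xᵀ) = 0 :=
      calc (2 : ℂ) • (X * L + L * Xᵀ)
          = (X * (Q + L) + (Q + L) * Xᵀ) - (X * (Q - L) + (Q - L) * Xᵀ) := by
            rw [two_smul]; noncomm_ring
        _ = 0 := by rw [h, hT, sub_zero]
    exact ⟨(smul_eq_zero.mp hQ').resolve_left two_ne_zero,
      (smul_eq_zero.mp hL').resolve_left two_ne_zero⟩
  · rintro ⟨hQX, hLX⟩
    rw [mul_add, add_mul, add_add_add_comm, hQX, hLX, add_zero]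

theorem mem_ker_formActionL_vecMulVec_self {v : n → ℂ} (hv : v ≠ 0) {X : Matrix n n ℂ} :
    X ∈ LinearMap.ker (formActionL n (vecMulVec v v)) ↔ X *ᵥ v = 0 := by
  rw [mem_ker_formActionL, mul_vecMulVec, vecMulVec_mul, vecMul_transpose]
  exact ⟨eq_zero_of_vecMulVec_add_vecMulVec_eq_zero hv, fun h => by simp [h]⟩

theorem mem_ker_formActionL_iff_mul_isSymm {v u : n → ℂ} {L X : Matrix n n ℂ} (hL : Lᵀ = -L)
    (hv : v ≠ 0) (hLu : L *ᵥ u = 0) (hvu : v ⬝ᵥ u ≠ 0) :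
    X ∈ LinearMap.ker (formActionL n (vecMulVec v v + L)) ↔
      (X * (vecMulVec v v + L)).IsSymm ∧ (X * (vecMulVec v v + L)) *ᵥ u = 0 := by
  rw [ker_formActionL_add_eq_inf (transpose_vecMulVec v v) hL, Submodule.mem_inf,
    mem_ker_formActionL_vecMulVec_self hv, mem_ker_formActionL]
  have hmul (hXv : X *ᵥ v = 0) : X * (vecMulVec v v + L) = X * L := by
    rw [mul_add, mul_vecMulVec, hXv, zero_vecMulVec, zero_add]
  have hsymm : (X * L).IsSymm ↔ X * L + L * Xᵀ = 0 := by
    rw [IsSymm, transpose_mul, hL, neg_mul, neg_eq_iff_eq_neg, ← add_eq_zero_iff_eq_neg,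
      add_comm (L * Xᵀ)]
  constructor
  · rintro ⟨hXv, hXL⟩
    rw [hmul hXv, ← mulVec_mulVec, hLu, mulVec_zero, hsymm]
    exact ⟨hXL, rfl⟩
  · rintro ⟨hS, hSu⟩
    have hXv : X *ᵥ v = 0 := by
      rw [← mulVec_mulVec, add_mulVec, hLu, add_zero, vecMulVec_mulVec, op_smul_eq_smul,
        mulVec_smul] at hSu
      exact (smul_eq_zero.mp hSu).resolve_left hvu
    rw [hmul hXv, hsymm] at hS
    exact ⟨hXv, hS⟩

end formAction

theorem dim_hB_caseA4_general (k : ℕ)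
    (B Q L : Matrix (Fin k) (Fin k) ℂ) (hB : B = Q + L)
    (hQsymm : Qᵀ = Q) (hQrank : Q.rank = 1)
    (hLskew : Lᵀ = -L) (hLrank : L.rank = k - 1)
    (hBnd : IsUnit B.det) :
    Module.finrank ℂ (LinearMap.ker (formActionL (Fin k) B)) = k * (k - 1) / 2 := by
  subst hB
  have hk : 0 < k := one_pos.trans_le (hQrank ▸ Q.rank_le_width)
  obtain ⟨v, rfl⟩ := IsSymm.exists_eq_vecMulVec_self_of_rank_eq_one hQsymm hQrank
  have hv : v ≠ 0 := by rintro rfl; simp at hQrank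
  obtain ⟨u, hu, hLu⟩ := exists_mulVec_eq_zero_iff.mpr
    (det_eq_zero_of_rank_lt (by rw [hLrank, Fintype.card_fin]; omega))
  have hvu : v ⬝ᵥ u ≠ 0 := fun h0 => hBnd.ne_zero <| exists_mulVec_eq_zero_iff.mp
    ⟨u, hu, by simp [add_mulVec, hLu, vecMulVec_mulVec, h0]⟩
  have hker : LinearMap.ker (formActionL (Fin k) (vecMulVec v v + L)) =
      (symmetricMatrices (Fin k) ℂ ⊓ LinearMap.ker ((mulVecBilin ℂ ℂ).flip u)).comap
        (((isUnit_iff_isUnit_det _).mpr hBnd).unit.mulRightLinearEquiv ℂ).toLinearMap :=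
    Submodule.ext fun X => mem_ker_formActionL_iff_mul_isSymm hLskew hv hLu hvu
  rw [hker, Submodule.comap_equiv_eq_map_symm, LinearEquiv.finrank_map_eq,
    finrank_symmetricMatrices_inf_ker_mulVec hu, Fintype.card_fin, Nat.choose_two_right]

/-- Case A4: for a nondegenerate bilinear form `B = Q + Λ` on `ℂ^k` with `Q`
symmetric of rank 1 and `Λ` skew-symmetric of rank `k−1` (so `k` is odd),
`dim h_B = k(k−1)/2`. -/
theorem dim_hB_caseA4 (k : ℕ) (hodd : Odd k)
    (B Q L : Matrix (Fin k) (Fin k) ℂ) (hB : B = Q + L)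
    (hQsymm : Qᵀ = Q) (hQrank : Q.rank = 1)
    (hLskew : Lᵀ = -L) (hLrank : L.rank = k - 1)
    (hBnd : IsUnit B.det) :
    Module.finrank ℂ (LinearMap.ker (formActionL (Fin k) B)) = k * (k - 1) / 2 :=
  dim_hB_caseA4_general k B Q L hB hQsymm hQrank hLskew hLrank hBnd
end
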